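/- arXiv:1712.01592 — 4 statements merged into one kernel-verified Lean document; each statement's English description precedes it below -/
import Mathlib

section
/- Let $h$ be the free Dirichlet Schr\"odinger operator on $\mathbb{N}$, and define $g_0[n,m]=\min(n,m)$ and $g_2[n,m]=-\tfrac{1}{6}\min(n,m)+\tfrac{1}{6}\min(n,m)^3+\tfrac{1}{2}nm\max(n,m)$. Then $h g_2 u = -g_0 u$ for every finitely supported $u:\mathbb{N}\to\mathbb{C}$. -/
/-!
The kernel `g₂` is a polynomial in `n` on each of the regions `n < m`, `n = m`, `n > m`, so its
second difference `2 g₂[n,m] - g₂[n+1,m] - g₂[n-1,m]` is computed by `ring` in each region, and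
equals `-min(n,m)`. Since `g₂[0,m] = 0`, this is exactly `h` applied to the column `g₂[·,m]` at
every `n ≥ 1`. For finitely supported `u` all the series are finite sums, and `h` commutes with them.
-/

/-- The free Dirichlet discrete Laplacian on the half-line `ℕ = {1,2,…}`
(the value at the unused index `0` is set to `0`). -/
noncomputable def halfLineOp (u : ℕ → ℂ) : ℕ → ℂ := fun n =>
  if n = 0 then 0
  else if n = 1 then 2 * u 1 - u 2
  else 2 * u n - u (n + 1) - u (n - 1)

theorem halfLineOp_of_apply_zero {f : ℕ → ℂ} (hf : f 0 = 0) {n : ℕ} (hn : 1 ≤ n) :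
    halfLineOp f n = 2 * f n - f (n + 1) - f (n - 1) := by
  unfold halfLineOp
  split_ifs with h0 h1
  · omega
  · subst h1; simp [hf]
  · rfl

theorem halfLineOp_sum_mul (K : ℕ → ℕ → ℂ) (u : ℕ → ℂ) (s : Finset ℕ) (n : ℕ) :
    halfLineOp (fun k => ∑ m ∈ s, K k m * u m) n = ∑ m ∈ s, halfLineOp (fun k => K k m) n * u m := by
  unfold halfLineOp
  split_ifs <;>
    simp only [Finset.sum_const_zero, zero_mul, Finset.mul_sum, ← Finset.sum_sub_distrib, sub_mul]
  all_goals ring_nf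

noncomputable def halfLineG2 (n m : ℕ) : ℂ :=
  -(1 / 6 : ℂ) * ((min n m : ℕ) : ℂ) + (1 / 6 : ℂ) * ((min n m : ℕ) : ℂ) ^ 3
    + (1 / 2 : ℂ) * (n : ℂ) * (m : ℂ) * ((max n m : ℕ) : ℂ)

theorem halfLineG2_zero_left (m : ℕ) : halfLineG2 0 m = 0 := by
  simp [halfLineG2]

theorem halfLineG2_secondDiff (n m : ℕ) :
    2 * halfLineG2 (n + 1) m - halfLineG2 (n + 2) m - halfLineG2 n m = -((min (n + 1) m : ℕ) : ℂ) := by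
  unfold halfLineG2
  rcases lt_trichotomy m (n + 1) with h | rfl | h
  · rw [min_eq_right h.le, min_eq_right (by omega : m ≤ n + 2), min_eq_right (by omega : m ≤ n),
      max_eq_left h.le, max_eq_left (by omega : m ≤ n + 2), max_eq_left (by omega : m ≤ n)]
    push_cast; ring
  · rw [min_self, min_eq_right (by omega : n + 1 ≤ n + 2), min_eq_left (by omega : n ≤ n + 1),
      max_self, max_eq_left (by omega : n + 1 ≤ n + 2), max_eq_right (by omega : n ≤ n + 1)]
    push_cast; ring
  · rw [min_eq_left h.le, min_eq_left (by omega : n + 2 ≤ m), min_eq_left (by omega : n ≤ m),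
      max_eq_right h.le, max_eq_right (by omega : n + 2 ≤ m), max_eq_right (by omega : n ≤ m)]
    push_cast; ring

theorem halfLineOp_halfLineG2 {n : ℕ} (hn : 1 ≤ n) (m : ℕ) :
    halfLineOp (fun k => halfLineG2 k m) n = -((min n m : ℕ) : ℂ) := by
  obtain ⟨n, rfl⟩ := Nat.exists_eq_add_of_le' hn
  rw [halfLineOp_of_apply_zero (halfLineG2_zero_left m) hn, ← halfLineG2_secondDiff]
  rfl

theorem tsum_mul_eq_sum_toFinset {u : ℕ → ℂ} (hu : (Function.support u).Finite) (c : ℕ → ℂ) :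
    ∑' m, c m * u m = ∑ m ∈ hu.toFinset, c m * u m :=
  tsum_eq_sum fun m hm => by simp_all

theorem halfLineOp_g2_general (u : ℕ → ℂ) (hfin : (Function.support u).Finite) :
    ∀ n : ℕ, 1 ≤ n →
      halfLineOp (fun k => ∑' m : ℕ,
          (-(1 / 6 : ℂ) * ((min k m : ℕ) : ℂ) + (1 / 6 : ℂ) * ((min k m : ℕ) : ℂ) ^ 3
            + (1 / 2 : ℂ) * (k : ℂ) * (m : ℂ) * ((max k m : ℕ) : ℂ)) * u m) n =
        -∑' m : ℕ, ((min n m : ℕ) : ℂ) * u m := by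
  intro n hn
  simp only [tsum_mul_eq_sum_toFinset hfin]
  rw [halfLineOp_sum_mul, ← Finset.sum_neg_distrib]
  refine Finset.sum_congr rfl fun m _ => ?_
  rw [← neg_mul]
  exact congrArg (· * u m) (halfLineOp_halfLineG2 hn m)

/-- `h g₂ u = -g₀ u`, where `g₂[n,m] = -(1/6)min(n,m) + (1/6)min(n,m)³ + (1/2)nm·max(n,m)`
and `g₀[n,m] = min(n,m)`. -/
theorem halfLineOp_g2 (u : ℕ → ℂ) (hu0 : u 0 = 0) (hfin : (Function.support u).Finite) :
    ∀ n : ℕ, 1 ≤ n →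
      halfLineOp (fun k => ∑' m : ℕ,
          (-(1 / 6 : ℂ) * ((min k m : ℕ) : ℂ) + (1 / 6 : ℂ) * ((min k m : ℕ) : ℂ) ^ 3
            + (1 / 2 : ℂ) * (k : ℂ) * (m : ℂ) * ((max k m : ℕ) : ℂ)) * u m) n =
        -∑' m : ℕ, ((min n m : ℕ) : ℂ) * u m :=
  halfLineOp_g2_general u hfin
end

section
/- Let $h$ be the free Dirichlet Schr\"odinger operator on $\mathbb{N}$ and let $g_3[n,m]=\tfrac{5}{24}nm-\tfrac{1}{6}n^3m-\tfrac{1}{6}nm^3$ and $g_1[n,m]=-nm$. Then $hg_3u=-g_1u$ for every finitely supported $u:\mathbb{N}\to\mathbb{C}$. -/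
open Finset

theorem halfLineOp_finset_sum {ι : Type*} (s : Finset ι) (f : ι → ℕ → ℂ) (n : ℕ) :
    halfLineOp (fun k => ∑ i ∈ s, f i k) n = ∑ i ∈ s, halfLineOp (f i) n := by
  unfold halfLineOp
  split_ifs <;> simp [mul_sum, sum_sub_distrib]

theorem halfLineOp_mul_const (f : ℕ → ℂ) (c : ℂ) (n : ℕ) :
    halfLineOp (fun k => f k * c) n = halfLineOp f n * c := by
  unfold halfLineOp
  split_ifs <;> ring

theorem tsum_mul_eq_sum_of_support_finite {ι α : Type*} [NonUnitalNonAssocSemiring α]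
    [TopologicalSpace α] {u : ι → α} (hfin : (Function.support u).Finite) (c : ι → α) :
    ∑' m, c m * u m = ∑ m ∈ hfin.toFinset, c m * u m :=
  tsum_eq_sum fun m hm => by
    rw [Set.Finite.mem_toFinset, Function.notMem_support] at hm
    rw [hm, mul_zero]

theorem halfLineOp_tsum_mul {u : ℕ → ℂ} (hfin : (Function.support u).Finite)
    (K : ℕ → ℕ → ℂ) (n : ℕ) :
    halfLineOp (fun k => ∑' m, K k m * u m) n = ∑' m, halfLineOp (K · m) n * u m := by
  simp only [tsum_mul_eq_sum_of_support_finite hfin, halfLineOp_finset_sum,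
    halfLineOp_mul_const]

theorem halfLineOp_g3_column {n : ℕ} (hn : 1 ≤ n) (m : ℕ) :
    halfLineOp (fun k => (5 / 24 : ℂ) * (k : ℂ) * (m : ℂ) - (1 / 6 : ℂ) * (k : ℂ) ^ 3 * (m : ℂ)
      - (1 / 6 : ℂ) * (k : ℂ) * (m : ℂ) ^ 3) n = n * m := by
  obtain rfl | ⟨j, rfl⟩ : n = 1 ∨ ∃ j, n = j + 2 :=
    (Nat.eq_or_lt_of_le hn).imp Eq.symm fun h => ⟨n - 2, by omega⟩
  · simp only [halfLineOp, if_pos]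
    push_cast
    ring
  · simp only [halfLineOp, Nat.add_eq_zero_iff, OfNat.ofNat_ne_zero, and_false, if_false,
      show j + 2 ≠ 1 by omega]
    push_cast
    ring

theorem halfLineOp_g3_general (u : ℕ → ℂ) (hfin : (Function.support u).Finite) :
    ∀ n : ℕ, 1 ≤ n →
      halfLineOp (fun k => ∑' m : ℕ,
          ((5 / 24 : ℂ) * (k : ℂ) * (m : ℂ) - (1 / 6 : ℂ) * (k : ℂ) ^ 3 * (m : ℂ)
            - (1 / 6 : ℂ) * (k : ℂ) * (m : ℂ) ^ 3) * u m) n =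
        -∑' m : ℕ, (-((n : ℂ) * (m : ℂ))) * u m := by
  intro n hn
  rw [halfLineOp_tsum_mul hfin]
  simp only [halfLineOp_g3_column hn, neg_mul, tsum_neg, neg_neg]

/-- `h g₃ u = -g₁ u`, where `g₃[n,m] = (5/24)nm - (1/6)n³m - (1/6)nm³`
and `g₁[n,m] = -nm`. -/
theorem halfLineOp_g3 (u : ℕ → ℂ) (hu0 : u 0 = 0) (hfin : (Function.support u).Finite) :
    ∀ n : ℕ, 1 ≤ n →
      halfLineOp (fun k => ∑' m : ℕ,
          ((5 / 24 : ℂ) * (k : ℂ) * (m : ℂ) - (1 / 6 : ℂ) * (k : ℂ) ^ 3 * (m : ℂ)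
            - (1 / 6 : ℂ) * (k : ℂ) * (m : ℂ) ^ 3) * u m) n =
        -∑' m : ℕ, (-((n : ℂ) * (m : ℂ))) * u m :=
  halfLineOp_g3_general u hfin
end

section
/- Inversion formula with projection (Jensen–Nenciu): let $M$ be a bounded operator on a Hilbert space $\mathcal{K}$ and let $Q$ be an orthogonal projection such that $M+Q$ is invertible and $Q$ commutes suitably so that $m:=Q - Q(M+Q)^{-1}Q$ satisfies: $M$ is invertible if and only if $m$ is invertible as an operator on $Q\mathcal{K}$, and in that case $M^{-1}=(M+Q)^{-1}+(M+Q)^{-1}Q m^{\dagger} Q(M+Q)^{-1}$ where $m^\dagger$ is the inverse of $m$ on $Q\mathcal{K}$ extended by zero on $(Q\mathcal{K})^\perp$. -/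
/-! With `r = (a + q)⁻¹` and `q` idempotent, the identities `a r = 1 - q r` and `r a = 1 - r q`
give `a r q = q - q r q = q r a`. Hence a two-sided inverse `md` of the Schur-type complement
`q - q r q` on `q R q` yields the inverse `r + r q md q r` of `a`, and conversely an inverse `b`
of `a` yields the inverse `q + q b q` of the complement. -/

section SchurComplement

variable {R : Type*} [Ring R] {a q r : R}

theorem mul_mul_eq_sub_of_add_mul_eq_one (hr : (a + q) * r = 1) :
    a * r * q = q - q * r * q := by
  calc a * r * q = (a + q) * r * q - q * r * q := by noncomm_ring
    _ = q - q * r * q := by rw [hr, one_mul]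

theorem mul_mul_eq_sub_of_mul_add_eq_one (hr : r * (a + q) = 1) :
    q * r * a = q - q * r * q := by
  calc q * r * a = q * (r * (a + q)) - q * r * q := by noncomm_ring
    _ = q - q * r * q := by rw [hr, mul_one]

theorem mul_add_compl_inv_eq_one (hq : IsIdempotentElem q) (hr : (a + q) * r = 1) {md : R}
    (hmd : (q - q * r * q) * md = q) : a * (r + r * q * md * q * r) = 1 := by
  calc a * (r + r * q * md * q * r) = a * r + a * r * q * md * (q * r) := by noncomm_ring
    _ = a * r + q * q * r := by rw [mul_mul_eq_sub_of_add_mul_eq_one hr, hmd, mul_assoc]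
    _ = (a + q) * r := by rw [hq.eq, add_mul]
    _ = 1 := hr

theorem add_compl_inv_mul_eq_one (hq : IsIdempotentElem q) (hr : r * (a + q) = 1) {md : R}
    (hmd : md * (q - q * r * q) = q) : (r + r * q * md * q * r) * a = 1 := by
  calc (r + r * q * md * q * r) * a = r * a + r * q * (md * (q * r * a)) := by noncomm_ring
    _ = r * (q * q) + r * a := by
      rw [mul_mul_eq_sub_of_mul_add_eq_one hr, hmd, add_comm, mul_assoc]
    _ = r * (a + q) := by rw [hq.eq, mul_add, add_comm]
    _ = 1 := hr

theorem compl_mul_eq_self_of_mul_eq_one (hq : IsIdempotentElem q) (hr : (a + q) * r = 1)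
    (hr' : r * (a + q) = 1) {b : R} (hb : a * b = 1) :
    (q - q * r * q) * (q + q * b * q) = q := by
  have hqb : a * r * (q * b) * q = q - a * r * q := by
    calc a * r * (q * b) * q = a * (r * (a + q)) * b * q - a * r * (a * b) * q := by noncomm_ring
      _ = q - a * r * q := by rw [hr', mul_one, hb, one_mul, mul_one]
  calc (q - q * r * q) * (q + q * b * q) = a * r * (q * q) + a * r * (q * q) * b * q := by
        rw [← mul_mul_eq_sub_of_add_mul_eq_one hr]; noncomm_ring
    _ = a * r * q + a * r * (q * b) * q := by rw [hq.eq]; noncomm_ring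
    _ = q := by rw [hqb]; abel

theorem mul_compl_eq_self_of_mul_eq_one (hq : IsIdempotentElem q) (hr : (a + q) * r = 1)
    (hr' : r * (a + q) = 1) {b : R} (hb : b * a = 1) :
    (q + q * b * q) * (q - q * r * q) = q := by
  have hbq : q * (b * q) * r * a = q - q * r * a := by
    calc q * (b * q) * r * a = q * b * ((a + q) * r) * a - q * (b * a) * r * a := by noncomm_ring
      _ = q - q * r * a := by rw [hr, mul_one, mul_assoc q b a, hb, mul_one]
  calc (q + q * b * q) * (q - q * r * q) = q * q * r * a + q * b * (q * q) * r * a := by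
        rw [← mul_mul_eq_sub_of_mul_add_eq_one hr']; noncomm_ring
    _ = q * r * a + q * (b * q) * r * a := by rw [hq.eq]; noncomm_ring
    _ = q := by rw [hbq]; abel

theorem isUnit_iff_exists_compl_inv (hq : IsIdempotentElem q) (ha : IsUnit (a + q)) :
    letI r := Ring.inverse (a + q)
    IsUnit a ↔ ∃ md : R, md * q = md ∧ q * md = md ∧
      (q - q * r * q) * md = q ∧ md * (q - q * r * q) = q := by
  have hr := Ring.mul_inverse_cancel _ ha
  have hr' := Ring.inverse_mul_cancel _ ha
  constructor
  · intro hunit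
    refine ⟨q + q * Ring.inverse a * q, ?_, ?_, compl_mul_eq_self_of_mul_eq_one hq hr hr'
      (Ring.mul_inverse_cancel _ hunit), mul_compl_eq_self_of_mul_eq_one hq hr hr'
      (Ring.inverse_mul_cancel _ hunit)⟩
    · simp only [add_mul, mul_assoc, hq.eq]
    · simp only [mul_add, ← mul_assoc, hq.eq]
  · rintro ⟨md, -, -, hmd, hmd'⟩
    exact ⟨⟨a, _, mul_add_compl_inv_eq_one hq hr hmd, add_compl_inv_mul_eq_one hq hr' hmd'⟩,
      rfl⟩

theorem inverse_eq_add_of_compl_inv (hq : IsIdempotentElem q) (ha : IsUnit (a + q)) {md : R}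
    (hmd : (q - q * Ring.inverse (a + q) * q) * md = q)
    (hmd' : md * (q - q * Ring.inverse (a + q) * q) = q) :
    Ring.inverse a = Ring.inverse (a + q) +
      Ring.inverse (a + q) * q * md * q * Ring.inverse (a + q) :=
  Ring.inverse_unit
    ⟨a, _, mul_add_compl_inv_eq_one hq (Ring.mul_inverse_cancel _ ha) hmd,
      add_compl_inv_mul_eq_one hq (Ring.inverse_mul_cancel _ ha) hmd'⟩

end SchurComplement

theorem jensen_nenciu_inversion_general
    {K : Type*} [NormedAddCommGroup K] [InnerProductSpace ℂ K]
    (M Q : K →L[ℂ] K) (hQproj : Q * Q = Q)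
    (hMQ : IsUnit (M + Q)) :
    letI m := Q - Q * Ring.inverse (M + Q) * Q
    (IsUnit M ↔
        ∃ md : K →L[ℂ] K, md * Q = md ∧ Q * md = md ∧ m * md = Q ∧ md * m = Q) ∧
      ∀ md : K →L[ℂ] K, md * Q = md → Q * md = md → m * md = Q → md * m = Q →
        Ring.inverse M =
          Ring.inverse (M + Q) +
            Ring.inverse (M + Q) * Q * md * Q * Ring.inverse (M + Q) :=
  ⟨isUnit_iff_exists_compl_inv hQproj hMQ,
    fun _ _ _ hmd hmd' => inverse_eq_add_of_compl_inv hQproj hMQ hmd hmd'⟩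

/-- Jensen–Nenciu inversion formula with projection: if `Q` is an orthogonal projection
with `M + Q` invertible, and `m = Q - Q (M+Q)⁻¹ Q`, then `M` is invertible if and only if
`m` is invertible as an operator on `QK` (encoded by a pseudo-inverse `md` supported on
`QK` with `m·md = md·m = Q`), and in that case
`M⁻¹ = (M+Q)⁻¹ + (M+Q)⁻¹ Q m† Q (M+Q)⁻¹`. -/
theorem jensen_nenciu_inversion
    {K : Type*} [NormedAddCommGroup K] [InnerProductSpace ℂ K] [CompleteSpace K]
    (M Q : K →L[ℂ] K) (hQsa : IsSelfAdjoint Q) (hQproj : Q * Q = Q)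
    (hMQ : IsUnit (M + Q)) :
    letI m := Q - Q * Ring.inverse (M + Q) * Q
    (IsUnit M ↔
        ∃ md : K →L[ℂ] K, md * Q = md ∧ Q * md = md ∧ m * md = Q ∧ md * m = Q) ∧
      ∀ md : K →L[ℂ] K, md * Q = md → Q * md = md → m * md = Q → md * m = Q →
        Ring.inverse M =
          Ring.inverse (M + Q) +
            Ring.inverse (M + Q) * Q * md * Q * Ring.inverse (M + Q) :=
  jensen_nenciu_inversion_general M Q hQproj hMQ
end

section
/- Let $u_1,u_2:\mathbb{Z}\to\mathbb{C}$ satisfy $\sum_m (1+m^2)^2|u_i[m]|<\infty$ and $\sum_m u_1[m]=\sum_m m\,u_1[m]=\sum_m m^2u_1[m]=\sum_m u_2[m]=0$. Define $(G_0^0u)[n]=-\tfrac12\sum_m|n-m|u[m]$ and $(G_2^0u)[n]=\sum_m(-\tfrac1{12}|n-m|^3+\tfrac1{12}|n-m|)u[m]$. Then $\langle u_2,G_2^0u_1\rangle=-\langle G_0^0u_2,G_0^0u_1\rangle$. -/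
open Filter Topology

noncomputable section PairAuxSec
namespace PairAux

/-- kernel `|k|` as a complex number -/
def AC (k : ℤ) : ℂ := ((|k| : ℤ) : ℂ)

/-- kernel `-|k|³/12 + |k|/12` -/
def KC (k : ℤ) : ℂ := -(1 / 12 : ℂ) * ((|k| : ℤ) : ℂ) ^ 3 + (1 / 12 : ℂ) * ((|k| : ℤ) : ℂ)

/-- first difference of `KC` -/
def BC (k : ℤ) : ℂ := KC (k + 1) - KC k

/-- first difference of `AC` -/
def SC (k : ℤ) : ℂ := AC (k + 1) - AC k

lemma AC_of_nonneg {k : ℤ} (h : 0 ≤ k) : AC k = (k : ℂ) := by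
  simp [AC, abs_of_nonneg h]

lemma AC_of_nonpos {k : ℤ} (h : k ≤ 0) : AC k = -(k : ℂ) := by
  simp [AC, abs_of_nonpos h]

lemma KC_of_nonneg {k : ℤ} (h : 0 ≤ k) : KC k = -(1/12 : ℂ) * (k:ℂ)^3 + (1/12 : ℂ) * (k:ℂ) := by
  simp [KC, abs_of_nonneg h]

lemma KC_of_nonpos {k : ℤ} (h : k ≤ 0) : KC k = (1/12 : ℂ) * (k:ℂ)^3 - (1/12 : ℂ) * (k:ℂ) := by
  rw [KC, abs_of_nonpos h]; push_cast; ring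

lemma BC_of_nonneg {k : ℤ} (h : 0 ≤ k) : BC k = -((k:ℂ)^2 + (k:ℂ)) / 4 := by
  rw [BC, KC_of_nonneg (by omega), KC_of_nonneg h]; push_cast; ring

lemma BC_of_neg {k : ℤ} (h : k < 0) : BC k = ((k:ℂ)^2 + (k:ℂ)) / 4 := by
  rw [BC, KC_of_nonpos (by omega), KC_of_nonpos (le_of_lt h)]; push_cast; ring

lemma SC_of_nonneg {k : ℤ} (h : 0 ≤ k) : SC k = 1 := by
  rw [SC, AC_of_nonneg (by omega), AC_of_nonneg h]; push_cast; ring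

lemma SC_of_neg {k : ℤ} (h : k < 0) : SC k = -1 := by
  rw [SC, AC_of_nonpos (by omega), AC_of_nonpos (le_of_lt h)]; push_cast; ring

lemma BC_sub (k : ℤ) : BC k - BC (k - 1) = -(1/2 : ℂ) * AC k := by
  rcases lt_trichotomy k 0 with h | h | h
  · rw [BC_of_neg h, BC_of_neg (by omega), AC_of_nonpos (le_of_lt h)]; push_cast; ring
  · subst h
    rw [BC_of_nonneg le_rfl, BC_of_neg (by omega), AC_of_nonneg le_rfl]; norm_num
  · rw [BC_of_nonneg (le_of_lt h), BC_of_nonneg (by omega), AC_of_nonneg (le_of_lt h)]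
    push_cast; ring

lemma SC_sub (k : ℤ) : SC k - SC (k - 1) = if k = 0 then (2:ℂ) else 0 := by
  rcases lt_trichotomy k 0 with h | h | h
  · rw [SC_of_neg h, SC_of_neg (by omega), if_neg (by omega)]; ring
  · subst h; rw [SC_of_nonneg le_rfl, SC_of_neg (by omega), if_pos rfl]; ring
  · rw [SC_of_nonneg (le_of_lt h), SC_of_nonneg (by omega), if_neg (by omega)]; ring

-- norm facts
lemma norm_intCast (a : ℤ) : ‖((a : ℤ) : ℂ)‖ = |(a : ℝ)| := by
  exact Complex.norm_intCast a

lemma norm_AC (k : ℤ) : ‖AC k‖ = |(k:ℝ)| := by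
  rw [AC, norm_intCast]; push_cast; rw [abs_abs]

lemma abs_le_one_add_sq (x : ℝ) : |x| ≤ 1 + x^2 := by
  nlinarith [sq_nonneg (|x| - 1), sq_abs x, abs_nonneg x]

lemma AC_bound (k : ℤ) : ‖AC k‖ ≤ 1 + (k:ℝ)^2 := by
  rw [norm_AC]; exact abs_le_one_add_sq _

lemma AC_bound2 (k : ℤ) : ‖AC k‖ ≤ (1 + (k:ℝ)^2)^2 := by
  refine (AC_bound k).trans ?_
  nlinarith [sq_nonneg ((k:ℝ)), sq_nonneg (1 + (k:ℝ)^2)]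

lemma KC_bound (k : ℤ) : ‖KC k‖ ≤ (1 + (k:ℝ)^2)^2 := by
  have h1 : ‖KC k‖ ≤ (1/12) * |(k:ℝ)|^3 + (1/12) * |(k:ℝ)| := by
    rw [KC]
    refine (norm_add_le _ _).trans ?_
    rw [norm_mul, norm_mul, norm_neg, norm_pow, norm_intCast]
    have : ‖(1/12 : ℂ)‖ = 1/12 := by norm_num
    rw [this]
    push_cast
    rw [abs_abs]
  refine h1.trans ?_
  have h2 : |(k:ℝ)| ≤ 1 + (k:ℝ)^2 := abs_le_one_add_sq _
  nlinarith [abs_nonneg (k:ℝ), sq_abs (k:ℝ), sq_nonneg ((k:ℝ)^2 - |(k:ℝ)|)]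

lemma BC_bound (k : ℤ) : ‖BC k‖ ≤ 1 + (k:ℝ)^2 := by
  have h : ‖BC k‖ = ‖((k:ℂ)^2 + (k:ℂ)) / 4‖ := by
    rcases le_or_gt 0 k with h | h
    · rw [BC_of_nonneg h, neg_div, norm_neg]
    · rw [BC_of_neg h]
  rw [h]
  have h2 : ‖((k:ℂ)^2 + (k:ℂ)) / 4‖ ≤ (|(k:ℝ)|^2 + |(k:ℝ)|)/4 := by
    rw [norm_div]
    have : ‖(4:ℂ)‖ = 4 := by norm_num
    rw [this]
    gcongr
    refine (norm_add_le _ _).trans ?_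
    rw [norm_pow, norm_intCast]
  refine h2.trans ?_
  have h3 := abs_le_one_add_sq (k:ℝ)
  nlinarith [sq_abs (k:ℝ), abs_nonneg (k:ℝ)]

lemma SC_bound (k : ℤ) : ‖SC k‖ ≤ 1 := by
  rcases le_or_gt 0 k with h | h
  · rw [SC_of_nonneg h]; norm_num
  · rw [SC_of_neg h]; norm_num


-- continuing inside namespace PairAux

lemma shift_bound (n m : ℤ) : 1 + ((n:ℝ) - m)^2 ≤ 2 * (1 + (n:ℝ)^2) * (1 + (m:ℝ)^2) := by
  nlinarith [sq_nonneg ((n:ℝ) + m), sq_nonneg ((n:ℝ) * m)]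

lemma shift_bound2 (n m : ℤ) :
    (1 + ((n:ℝ) - m)^2)^2 ≤ (2 * (1 + (n:ℝ)^2))^2 * ((1 + (m:ℝ)^2))^2 := by
  have h := shift_bound n m
  have h0 : (0:ℝ) ≤ 1 + ((n:ℝ) - m)^2 := by positivity
  calc (1 + ((n:ℝ) - m)^2)^2 ≤ (2 * (1 + (n:ℝ)^2) * (1 + (m:ℝ)^2))^2 := by
        exact pow_le_pow_left₀ h0 h 2
    _ = (2 * (1 + (n:ℝ)^2))^2 * ((1 + (m:ℝ)^2))^2 := by ring

/-- summability from a quartic polynomial bound -/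
lemma summable_aux {v : ℤ → ℂ}
    (hv : Summable fun m : ℤ => (1 + (m:ℝ)^2)^2 * ‖v m‖)
    {φ : ℤ → ℂ} {C : ℝ}
    (hφ : ∀ m, ‖φ m‖ ≤ C * (1 + (m:ℝ)^2)^2) :
    Summable fun m => φ m * v m := by
  apply Summable.of_norm
  apply Summable.of_nonneg_of_le (fun m => norm_nonneg _) (fun m => ?_) (hv.mul_left C)
  rw [norm_mul]
  calc ‖φ m‖ * ‖v m‖ ≤ C * (1 + (m:ℝ)^2)^2 * ‖v m‖ :=
        mul_le_mul_of_nonneg_right (hφ m) (norm_nonneg _)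
    _ = C * ((1 + (m:ℝ)^2)^2 * ‖v m‖) := by ring

/-- the `ℓ¹` lemma: a convolution kernel that agrees with "moment-killed" polynomials on
half-lines gives an `ℓ¹` output. -/
lemma l1_of_moments {v : ℤ → ℂ}
    (hv : Summable fun m : ℤ => (1 + (m:ℝ)^2)^2 * ‖v m‖)
    {B : ℤ → ℂ} {P Q : ℤ → ℤ → ℂ}
    (hB : ∀ k : ℤ, ‖B k‖ ≤ 1 + (k:ℝ)^2)
    (hP : ∀ n m : ℤ, ‖P n m‖ ≤ 1 + ((n:ℝ) - m)^2)
    (hQ : ∀ n m : ℤ, ‖Q n m‖ ≤ 1 + ((n:ℝ) - m)^2)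
    (heP : ∀ n m : ℤ, 0 ≤ n → m ≤ n → B (n - m) = P n m)
    (heQ : ∀ n m : ℤ, n < 0 → n < m → B (n - m) = Q n m)
    (hzP : ∀ n : ℤ, (∑' m : ℤ, P n m * v m) = 0)
    (hzQ : ∀ n : ℤ, (∑' m : ℤ, Q n m * v m) = 0) :
    Summable (fun n : ℤ => ‖∑' m : ℤ, B (n - m) * v m‖) := by
  classical
  set W : ℤ → ℤ → ℝ := fun n m =>
    if (0 ≤ n ∧ n < m) ∨ (m ≤ n ∧ n < 0) then 2 * (1 + (m:ℝ)^2) * ‖v m‖ else 0 with hW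
  have hWnonneg : ∀ n m, 0 ≤ W n m := by
    intro n m; rw [hW]; dsimp only
    split
    · positivity
    · exact le_rfl
  have hWle : ∀ n m, W n m ≤ 2 * ((1 + (m:ℝ)^2)^2 * ‖v m‖) := by
    intro n m; rw [hW]; dsimp only
    have hb : (0:ℝ) ≤ ‖v m‖ := norm_nonneg _
    have h1 : (1:ℝ) + (m:ℝ)^2 ≤ (1 + (m:ℝ)^2)^2 := by nlinarith [sq_nonneg (m:ℝ)]
    split
    · nlinarith
    · positivity
  have hWsum : ∀ n, Summable (W n) := by
    intro n
    exact Summable.of_nonneg_of_le (hWnonneg n) (hWle n) (hv.mul_left 2)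
  -- pointwise bound
  have step1 : ∀ n : ℤ, ‖∑' m : ℤ, B (n - m) * v m‖ ≤ ∑' m, W n m := by
    intro n
    have sB : Summable fun m => B (n - m) * v m := by
      apply summable_aux hv (C := 2 * (1 + (n:ℝ)^2))
      intro m
      refine (hB (n - m)).trans ?_
      push_cast
      have := shift_bound n m
      nlinarith [sq_nonneg (1 + (m:ℝ)^2), sq_nonneg ((n:ℝ)^2)]
    rcases le_or_gt 0 n with hn | hn
    · have sP : Summable fun m => P n m * v m := by
        apply summable_aux hv (C := 2 * (1 + (n:ℝ)^2))
        intro m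
        refine (hP n m).trans ?_
        have := shift_bound n m
        nlinarith [sq_nonneg (1 + (m:ℝ)^2)]
      have heq : (∑' m : ℤ, B (n - m) * v m) = ∑' m : ℤ, (B (n - m) - P n m) * v m := by
        have : (fun m : ℤ => (B (n - m) - P n m) * v m)
            = fun m => B (n - m) * v m - P n m * v m := by funext m; ring
        rw [this, Summable.tsum_sub sB sP, hzP n, sub_zero]
      rw [heq]
      apply tsum_of_norm_bounded (hWsum n).hasSum
      intro m
      rcases le_or_gt m n with hm | hm
      · rw [heP n m hn hm, sub_self, zero_mul, norm_zero]
        exact hWnonneg n m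
      · rw [hW]; dsimp only
        rw [if_pos (Or.inl ⟨hn, hm⟩), norm_mul]
        have hsq : ((n:ℝ) - m)^2 ≤ (m:ℝ)^2 := by
          have h1 : (0:ℝ) ≤ (n:ℝ) := by exact_mod_cast hn
          have h2 : (n:ℝ) < (m:ℝ) := by exact_mod_cast hm
          nlinarith
        have : ‖B (n - m) - P n m‖ ≤ 2 * (1 + (m:ℝ)^2) := by
          refine (norm_sub_le _ _).trans ?_
          have b1 := hB (n - m)
          have b2 := hP n m
          push_cast at b1
          nlinarith
        exact mul_le_mul_of_nonneg_right this (norm_nonneg _)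
    · have sQ : Summable fun m => Q n m * v m := by
        apply summable_aux hv (C := 2 * (1 + (n:ℝ)^2))
        intro m
        refine (hQ n m).trans ?_
        have := shift_bound n m
        nlinarith [sq_nonneg (1 + (m:ℝ)^2)]
      have heq : (∑' m : ℤ, B (n - m) * v m) = ∑' m : ℤ, (B (n - m) - Q n m) * v m := by
        have : (fun m : ℤ => (B (n - m) - Q n m) * v m)
            = fun m => B (n - m) * v m - Q n m * v m := by funext m; ring
        rw [this, Summable.tsum_sub sB sQ, hzQ n, sub_zero]
      rw [heq]
      apply tsum_of_norm_bounded (hWsum n).hasSum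
      intro m
      rcases lt_or_ge n m with hm | hm
      · rw [heQ n m hn hm, sub_self, zero_mul, norm_zero]
        exact hWnonneg n m
      · rw [hW]; dsimp only
        rw [if_pos (Or.inr ⟨hm, hn⟩), norm_mul]
        have hsq : ((n:ℝ) - m)^2 ≤ (m:ℝ)^2 := by
          have h1 : (n:ℝ) < 0 := by exact_mod_cast hn
          have h2 : (m:ℝ) ≤ (n:ℝ) := by exact_mod_cast hm
          nlinarith
        have : ‖B (n - m) - Q n m‖ ≤ 2 * (1 + (m:ℝ)^2) := by
          refine (norm_sub_le _ _).trans ?_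
          have b1 := hB (n - m)
          have b2 := hQ n m
          push_cast at b1
          nlinarith
        exact mul_le_mul_of_nonneg_right this (norm_nonneg _)
  -- summability via bounded partial sums
  apply summable_of_sum_le (fun n => norm_nonneg _)
  intro s
  have hcast : ∀ m : ℤ, (((max m 0 - min m 0).toNat : ℕ) : ℝ) = |(m:ℝ)| := by
    intro m
    have h : (max m 0 - min m 0).toNat = m.natAbs := by omega
    rw [h, Nat.cast_natAbs, Int.cast_abs]
  calc ∑ n ∈ s, ‖∑' m : ℤ, B (n - m) * v m‖
      ≤ ∑ n ∈ s, ∑' m, W n m := Finset.sum_le_sum fun n _ => step1 n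
    _ = ∑' m, ∑ n ∈ s, W n m := (Summable.tsum_finsetSum fun n _ => hWsum n).symm
    _ ≤ ∑' m : ℤ, 2 * ((1 + (m:ℝ)^2)^2 * ‖v m‖) := by
        apply Summable.tsum_le_tsum _ (summable_sum fun n _ => hWsum n) (hv.mul_left 2)
        intro m
        -- count the support of `W · m`
        have hsub : s.filter (fun n => (0 ≤ n ∧ n < m) ∨ (m ≤ n ∧ n < 0))
            ⊆ Finset.Ico (min m 0) (max m 0) := by
          intro n hn
          simp only [Finset.mem_filter] at hn
          simp only [Finset.mem_Ico]
          omega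
        have hval : (0:ℝ) ≤ 2 * (1 + (m:ℝ)^2) * ‖v m‖ := by positivity
        have : ∑ n ∈ s, W n m
            = ∑ n ∈ s.filter (fun n => (0 ≤ n ∧ n < m) ∨ (m ≤ n ∧ n < 0)),
                (2 * (1 + (m:ℝ)^2) * ‖v m‖) := by
          rw [Finset.sum_filter]
        rw [this, Finset.sum_const, nsmul_eq_mul]
        have hcard : ((s.filter (fun n => (0 ≤ n ∧ n < m) ∨ (m ≤ n ∧ n < 0))).card : ℝ)
            ≤ |(m:ℝ)| := by
          have h1 := Finset.card_le_card hsub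
          have h2 : (Finset.Ico (min m 0) (max m 0)).card = (max m 0 - min m 0).toNat :=
            Int.card_Ico _ _
          calc ((s.filter _).card : ℝ) ≤ ((Finset.Ico (min m 0) (max m 0)).card : ℝ) := by
                exact_mod_cast h1
            _ = |(m:ℝ)| := by rw [h2, hcast m]
        calc (↑(s.filter _).card) * (2 * (1 + (m:ℝ)^2) * ‖v m‖)
            ≤ |(m:ℝ)| * (2 * (1 + (m:ℝ)^2) * ‖v m‖) :=
              mul_le_mul_of_nonneg_right hcard hval
          _ ≤ 2 * ((1 + (m:ℝ)^2)^2 * ‖v m‖) := by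
              have hm := abs_le_one_add_sq (m:ℝ)
              have h0 : (0:ℝ) ≤ ‖v m‖ := norm_nonneg _
              have h1 : (0:ℝ) ≤ 1 + (m:ℝ)^2 := by positivity
              nlinarith [abs_nonneg (m:ℝ)]
    _ = 2 * ∑' m : ℤ, (1 + (m:ℝ)^2)^2 * ‖v m‖ := tsum_mul_left
/-- boundedness lemma: moment-subtraction gives a uniform bound. -/
lemma bounded_of_moments {v : ℤ → ℂ}
    (hv : Summable fun m : ℤ => (1 + (m:ℝ)^2)^2 * ‖v m‖)
    {B : ℤ → ℂ} {P Q : ℤ → ℤ → ℂ} {rP rQ : ℂ}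
    (hB : ∀ k : ℤ, ‖B k‖ ≤ (1 + (k:ℝ)^2)^2)
    (hP : ∀ n m : ℤ, ‖P n m‖ ≤ (1 + ((n:ℝ) - m)^2)^2)
    (hQ : ∀ n m : ℤ, ‖Q n m‖ ≤ (1 + ((n:ℝ) - m)^2)^2)
    (heP : ∀ n m : ℤ, 0 ≤ n → m ≤ n → B (n - m) = P n m)
    (heQ : ∀ n m : ℤ, n < 0 → n < m → B (n - m) = Q n m)
    (hzP : ∀ n : ℤ, (∑' m : ℤ, P n m * v m) = rP)
    (hzQ : ∀ n : ℤ, (∑' m : ℤ, Q n m * v m) = rQ) :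
    ∀ n : ℤ, ‖∑' m : ℤ, B (n - m) * v m‖
      ≤ 2 * (∑' m : ℤ, (1 + (m:ℝ)^2)^2 * ‖v m‖) + ‖rP‖ + ‖rQ‖ := by
  intro n
  have sB : Summable fun m => B (n - m) * v m := by
    apply summable_aux hv (C := (2 * (1 + (n:ℝ)^2))^2)
    intro m
    refine (hB (n - m)).trans ?_
    push_cast
    exact shift_bound2 n m
  rcases le_or_gt 0 n with hn | hn
  · have sP : Summable fun m => P n m * v m := by
      apply summable_aux hv (C := (2 * (1 + (n:ℝ)^2))^2)
      intro m
      exact (hP n m).trans (shift_bound2 n m)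
    have heq : (∑' m : ℤ, B (n - m) * v m)
        = (∑' m : ℤ, (B (n - m) - P n m) * v m) + rP := by
      have : (fun m : ℤ => (B (n - m) - P n m) * v m)
          = fun m => B (n - m) * v m - P n m * v m := by funext m; ring
      rw [this, Summable.tsum_sub sB sP, hzP n]; ring
    rw [heq]
    have hmain : ‖∑' m : ℤ, (B (n - m) - P n m) * v m‖
        ≤ 2 * ∑' m : ℤ, (1 + (m:ℝ)^2)^2 * ‖v m‖ := by
      rw [show (2:ℝ) * ∑' m : ℤ, (1 + (m:ℝ)^2)^2 * ‖v m‖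
          = ∑' m : ℤ, 2 * ((1 + (m:ℝ)^2)^2 * ‖v m‖) from tsum_mul_left.symm]
      apply tsum_of_norm_bounded (hv.mul_left 2).hasSum
      intro m
      rcases le_or_gt m n with hm | hm
      · rw [heP n m hn hm, sub_self, zero_mul, norm_zero]; positivity
      · rw [norm_mul]
        have hsq : ((n:ℝ) - m)^2 ≤ (m:ℝ)^2 := by
          have h1 : (0:ℝ) ≤ (n:ℝ) := by exact_mod_cast hn
          have h2 : (n:ℝ) < (m:ℝ) := by exact_mod_cast hm
          nlinarith
        have hb : ‖B (n - m) - P n m‖ ≤ 2 * (1 + (m:ℝ)^2)^2 := by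
          refine (norm_sub_le _ _).trans ?_
          have b1 := hB (n - m); have b2 := hP n m
          push_cast at b1
          have key : (1 + ((n:ℝ) - m)^2)^2 ≤ (1 + (m:ℝ)^2)^2 := by
            have h0 : (0:ℝ) ≤ 1 + ((n:ℝ) - m)^2 := by positivity
            apply pow_le_pow_left₀ h0
            nlinarith
          nlinarith
        calc ‖B (n - m) - P n m‖ * ‖v m‖ ≤ 2 * (1 + (m:ℝ)^2)^2 * ‖v m‖ :=
              mul_le_mul_of_nonneg_right hb (norm_nonneg _)
          _ = 2 * ((1 + (m:ℝ)^2)^2 * ‖v m‖) := by ring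
    calc ‖(∑' m : ℤ, (B (n - m) - P n m) * v m) + rP‖
        ≤ ‖∑' m : ℤ, (B (n - m) - P n m) * v m‖ + ‖rP‖ := norm_add_le _ _
      _ ≤ 2 * (∑' m : ℤ, (1 + (m:ℝ)^2)^2 * ‖v m‖) + ‖rP‖ := by linarith
      _ ≤ 2 * (∑' m : ℤ, (1 + (m:ℝ)^2)^2 * ‖v m‖) + ‖rP‖ + ‖rQ‖ := by
          have := norm_nonneg rQ; linarith
  · have sQ : Summable fun m => Q n m * v m := by
      apply summable_aux hv (C := (2 * (1 + (n:ℝ)^2))^2)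
      intro m
      exact (hQ n m).trans (shift_bound2 n m)
    have heq : (∑' m : ℤ, B (n - m) * v m)
        = (∑' m : ℤ, (B (n - m) - Q n m) * v m) + rQ := by
      have : (fun m : ℤ => (B (n - m) - Q n m) * v m)
          = fun m => B (n - m) * v m - Q n m * v m := by funext m; ring
      rw [this, Summable.tsum_sub sB sQ, hzQ n]; ring
    rw [heq]
    have hmain : ‖∑' m : ℤ, (B (n - m) - Q n m) * v m‖
        ≤ 2 * ∑' m : ℤ, (1 + (m:ℝ)^2)^2 * ‖v m‖ := by
      rw [show (2:ℝ) * ∑' m : ℤ, (1 + (m:ℝ)^2)^2 * ‖v m‖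
          = ∑' m : ℤ, 2 * ((1 + (m:ℝ)^2)^2 * ‖v m‖) from tsum_mul_left.symm]
      apply tsum_of_norm_bounded (hv.mul_left 2).hasSum
      intro m
      rcases lt_or_ge n m with hm | hm
      · rw [heQ n m hn hm, sub_self, zero_mul, norm_zero]; positivity
      · rw [norm_mul]
        have hsq : ((n:ℝ) - m)^2 ≤ (m:ℝ)^2 := by
          have h1 : (n:ℝ) < 0 := by exact_mod_cast hn
          have h2 : (m:ℝ) ≤ (n:ℝ) := by exact_mod_cast hm
          nlinarith
        have hb : ‖B (n - m) - Q n m‖ ≤ 2 * (1 + (m:ℝ)^2)^2 := by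
          refine (norm_sub_le _ _).trans ?_
          have b1 := hB (n - m); have b2 := hQ n m
          push_cast at b1
          have key : (1 + ((n:ℝ) - m)^2)^2 ≤ (1 + (m:ℝ)^2)^2 := by
            have h0 : (0:ℝ) ≤ 1 + ((n:ℝ) - m)^2 := by positivity
            apply pow_le_pow_left₀ h0
            nlinarith
          nlinarith
        calc ‖B (n - m) - Q n m‖ * ‖v m‖ ≤ 2 * (1 + (m:ℝ)^2)^2 * ‖v m‖ :=
              mul_le_mul_of_nonneg_right hb (norm_nonneg _)
          _ = 2 * ((1 + (m:ℝ)^2)^2 * ‖v m‖) := by ring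
    calc ‖(∑' m : ℤ, (B (n - m) - Q n m) * v m) + rQ‖
        ≤ ‖∑' m : ℤ, (B (n - m) - Q n m) * v m‖ + ‖rQ‖ := norm_add_le _ _
      _ ≤ 2 * (∑' m : ℤ, (1 + (m:ℝ)^2)^2 * ‖v m‖) + ‖rQ‖ := by linarith
      _ ≤ 2 * (∑' m : ℤ, (1 + (m:ℝ)^2)^2 * ‖v m‖) + ‖rP‖ + ‖rQ‖ := by
          have := norm_nonneg rP; linarith

/-- telescoping sums over `ℤ` of a function tending to `0` at `±∞` vanish. -/
lemma tsum_telescope_zero {c : ℤ → ℂ} (hc : Tendsto c cofinite (𝓝 0))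
    (hs : Summable fun n : ℤ => c n - c (n - 1)) :
    (∑' n : ℤ, (c n - c (n - 1))) = 0 := by
  have hfin : ∀ N : ℕ, ∑ n ∈ Finset.Icc (-(N:ℤ)) (N:ℤ), (c n - c (n - 1))
      = c (N:ℤ) - c (-(N:ℤ) - 1) := by
    intro N
    induction N with
    | zero => simp
    | succ N ih =>
      have hins : Finset.Icc (-(N+1:ℕ):ℤ) ((N+1:ℕ):ℤ)
          = insert (-(N+1:ℕ):ℤ) (insert ((N+1:ℕ):ℤ) (Finset.Icc (-(N:ℤ)) (N:ℤ))) := by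
        ext x
        simp only [Finset.mem_Icc, Finset.mem_insert]
        push_cast
        omega
      rw [hins, Finset.sum_insert (by simp only [Finset.mem_insert, Finset.mem_Icc]; push_cast; omega),
        Finset.sum_insert (by simp only [Finset.mem_Icc]; push_cast; omega), ih]
      push_cast
      ring_nf
  have hmono : Monotone fun N : ℕ => Finset.Icc (-(N:ℤ)) (N:ℤ) := by
    intro a b hab
    apply Finset.Icc_subset_Icc <;> [skip; skip] <;> push_cast <;> omega
  have hexh : ∀ x : ℤ, ∃ N : ℕ, x ∈ Finset.Icc (-(N:ℤ)) (N:ℤ) := by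
    intro x
    exact ⟨x.natAbs, by simp only [Finset.mem_Icc]; omega⟩
  have h1 : Tendsto (fun N : ℕ => ∑ n ∈ Finset.Icc (-(N:ℤ)) (N:ℤ), (c n - c (n - 1))) atTop
      (𝓝 (∑' n : ℤ, (c n - c (n - 1)))) :=
    hs.hasSum.comp (tendsto_atTop_finset_of_monotone hmono hexh)
  have hcs : (cofinite : Filter ℤ) = atBot ⊔ atTop := Int.cofinite_eq
  have hct : Tendsto c atTop (𝓝 0) := by
    rw [hcs] at hc; exact hc.mono_left le_sup_right
  have hcb : Tendsto c atBot (𝓝 0) := by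
    rw [hcs] at hc; exact hc.mono_left le_sup_left
  have hnat : Tendsto (fun N : ℕ => (N:ℤ)) atTop atTop := tendsto_natCast_atTop_atTop
  have hneg : Tendsto (fun N : ℕ => -(N:ℤ) - 1) atTop atBot := by
    rw [tendsto_atBot]
    intro b
    filter_upwards [Filter.eventually_ge_atTop (b.natAbs + 1)] with N hN
    omega
  have h2 : Tendsto (fun N : ℕ => c (N:ℤ) - c (-(N:ℤ) - 1)) atTop (𝓝 (0 - 0)) :=
    (hct.comp hnat).sub (hcb.comp hneg)
  rw [sub_zero] at h2
  have h1' : Tendsto (fun N : ℕ => c (N:ℤ) - c (-(N:ℤ) - 1)) atTop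
      (𝓝 (∑' n : ℤ, (c n - c (n - 1)))) := by
    have := h1
    convert this using 1
    funext N
    exact (hfin N).symm
  exact tendsto_nhds_unique h1' h2

/-- Abel-type step: two summable functions whose difference telescopes have equal sums. -/
lemma tsum_eq_of_sub_telescope {A B c : ℤ → ℂ} (hA : Summable A) (hB : Summable B)
    (h : ∀ n, A n - B n = c n - c (n - 1)) (hc : Tendsto c cofinite (𝓝 0)) :
    (∑' n : ℤ, A n) = ∑' n : ℤ, B n := by
  have hs : Summable fun n : ℤ => c n - c (n - 1) := by
    have : (fun n : ℤ => c n - c (n - 1)) = fun n => A n - B n := by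
      funext n; exact (h n).symm
    rw [this]
    exact hA.sub hB
  have h0 := tsum_telescope_zero hc hs
  have : (∑' n : ℤ, (A n - B n)) = 0 := by
    rw [show (fun n : ℤ => A n - B n) = fun n => c n - c (n - 1) from funext h]
    exact h0
  rw [Summable.tsum_sub hA hB] at this
  exact sub_eq_zero.mp this
-- convolution transforms
def Gt (u : ℤ → ℂ) (n : ℤ) : ℂ := ∑' m : ℤ, KC (n - m) * u m
def Ft (u : ℤ → ℂ) (n : ℤ) : ℂ := ∑' m : ℤ, AC (n - m) * u m
def Et (u : ℤ → ℂ) (n : ℤ) : ℂ := ∑' m : ℤ, BC (n - m) * u m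
def Dt (u : ℤ → ℂ) (n : ℤ) : ℂ := ∑' m : ℤ, SC (n - m) * u m

variable {u : ℤ → ℂ}

lemma s_norm (hu : Summable fun m : ℤ => (1 + (m:ℝ)^2)^2 * ‖u m‖) :
    Summable fun m : ℤ => ‖u m‖ := by
  apply Summable.of_nonneg_of_le (fun m => norm_nonneg _) (fun m => ?_) hu
  have h1 : (1:ℝ) ≤ (1 + (m:ℝ)^2)^2 := by nlinarith [sq_nonneg (m:ℝ), sq_nonneg (1+(m:ℝ)^2)]
  nlinarith [norm_nonneg (u m)]

lemma s_mom0 (hu : Summable fun m : ℤ => (1 + (m:ℝ)^2)^2 * ‖u m‖) : Summable u :=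
  (s_norm hu).of_norm

lemma norm_castZ (n m : ℤ) : ‖(n:ℂ) - (m:ℂ)‖ = |(n:ℝ) - m| := by
  have h : (n:ℂ) - m = ((n - m : ℤ) : ℂ) := by push_cast; ring
  rw [h, norm_intCast]; push_cast; ring_nf

lemma norm_cast_pow (m : ℤ) (j : ℕ) : ‖((m:ℂ))^j‖ = |(m:ℝ)|^j := by
  rw [norm_pow, norm_intCast]

lemma abs_sq_le (x : ℝ) : |x|^2 ≤ (1 + x^2)^2 := by
  rw [sq_abs]
  nlinarith [sq_nonneg x, sq_nonneg (x^2)]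

lemma abs_cube_le (x : ℝ) : |x|^3 ≤ (1 + x^2)^2 := by
  have h3 : (0:ℝ) ≤ |x| := abs_nonneg x
  have h4 : |x|^2 = x^2 := sq_abs x
  nlinarith [sq_nonneg (|x|^2 - |x|), sq_nonneg (|x| - 1), sq_nonneg x]

lemma s_mom1 (hu : Summable fun m : ℤ => (1 + (m:ℝ)^2)^2 * ‖u m‖) :
    Summable fun m : ℤ => (m:ℂ) * u m := by
  apply summable_aux hu (C := 1)
  intro m
  rw [norm_intCast, one_mul]
  exact abs_le_one_add_sq _ |>.trans (by nlinarith [sq_nonneg (m:ℝ), sq_nonneg (1+(m:ℝ)^2), abs_nonneg (m:ℝ)])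

lemma s_mom2 (hu : Summable fun m : ℤ => (1 + (m:ℝ)^2)^2 * ‖u m‖) :
    Summable fun m : ℤ => (m:ℂ)^2 * u m := by
  apply summable_aux hu (C := 1)
  intro m
  rw [norm_cast_pow, one_mul]
  exact abs_sq_le _

lemma s_mom3 (hu : Summable fun m : ℤ => (1 + (m:ℝ)^2)^2 * ‖u m‖) :
    Summable fun m : ℤ => (m:ℂ)^3 * u m := by
  apply summable_aux hu (C := 1)
  intro m
  rw [norm_cast_pow, one_mul]
  exact abs_cube_le _

lemma sKt (hu : Summable fun m : ℤ => (1 + (m:ℝ)^2)^2 * ‖u m‖) (n : ℤ) :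
    Summable fun m : ℤ => KC (n - m) * u m := by
  apply summable_aux hu (C := (2 * (1 + (n:ℝ)^2))^2)
  intro m
  refine (KC_bound (n - m)).trans ?_
  push_cast
  exact shift_bound2 n m

lemma sAt (hu : Summable fun m : ℤ => (1 + (m:ℝ)^2)^2 * ‖u m‖) (n : ℤ) :
    Summable fun m : ℤ => AC (n - m) * u m := by
  apply summable_aux hu (C := (2 * (1 + (n:ℝ)^2))^2)
  intro m
  refine (AC_bound2 (n - m)).trans ?_
  push_cast
  exact shift_bound2 n m

lemma sBt (hu : Summable fun m : ℤ => (1 + (m:ℝ)^2)^2 * ‖u m‖) (n : ℤ) :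
    Summable fun m : ℤ => BC (n - m) * u m := by
  apply summable_aux hu (C := (2 * (1 + (n:ℝ)^2))^2)
  intro m
  refine (BC_bound (n - m)).trans ?_
  push_cast
  refine (shift_bound n m).trans ?_
  nlinarith [sq_nonneg (1+(n:ℝ)^2), sq_nonneg (1+(m:ℝ)^2), sq_nonneg ((1+(n:ℝ)^2) * (1+(m:ℝ)^2)), sq_nonneg ((1+(n:ℝ)^2) * (1+(m:ℝ)^2) - 1)]

lemma sSt (hu : Summable fun m : ℤ => (1 + (m:ℝ)^2)^2 * ‖u m‖) (n : ℤ) :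
    Summable fun m : ℤ => SC (n - m) * u m := by
  apply summable_aux hu (C := 1)
  intro m
  rw [one_mul]
  refine (SC_bound (n - m)).trans ?_
  nlinarith [sq_nonneg (m:ℝ), sq_nonneg (1+(m:ℝ)^2)]

-- first-difference identities
lemma Et_eq (hu : Summable fun m : ℤ => (1 + (m:ℝ)^2)^2 * ‖u m‖) (n : ℤ) :
    Et u n = Gt u (n + 1) - Gt u n := by
  have h : (fun m : ℤ => BC (n - m) * u m)
      = fun m : ℤ => KC ((n+1) - m) * u m - KC (n - m) * u m := by
    funext m
    rw [BC, show n - m + 1 = (n+1) - m from by ring]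
    ring
  rw [Et, h, Summable.tsum_sub (sKt hu (n+1)) (sKt hu n)]
  rfl

lemma Dt_eq (hu : Summable fun m : ℤ => (1 + (m:ℝ)^2)^2 * ‖u m‖) (n : ℤ) :
    Dt u n = Ft u (n + 1) - Ft u n := by
  have h : (fun m : ℤ => SC (n - m) * u m)
      = fun m : ℤ => AC ((n+1) - m) * u m - AC (n - m) * u m := by
    funext m
    rw [SC, show n - m + 1 = (n+1) - m from by ring]
    ring
  rw [Dt, h, Summable.tsum_sub (sAt hu (n+1)) (sAt hu n)]
  rfl

lemma Et_sub (hu : Summable fun m : ℤ => (1 + (m:ℝ)^2)^2 * ‖u m‖) (n : ℤ) :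
    Et u n - Et u (n - 1) = -(1/2 : ℂ) * Ft u n := by
  rw [Et, Et, ← Summable.tsum_sub (sBt hu n) (sBt hu (n-1))]
  have h : (fun m : ℤ => BC (n - m) * u m - BC ((n-1) - m) * u m)
      = fun m : ℤ => -(1/2 : ℂ) * (AC (n - m) * u m) := by
    funext m
    have := BC_sub (n - m)
    rw [show (n-1) - m = (n - m) - 1 from by ring]
    calc BC (n - m) * u m - BC (n - m - 1) * u m
        = (BC (n - m) - BC (n - m - 1)) * u m := by ring
      _ = (-(1/2 : ℂ) * AC (n - m)) * u m := by rw [this]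
      _ = -(1/2 : ℂ) * (AC (n - m) * u m) := by ring
  rw [h, tsum_mul_left]
  rfl

lemma Dt_sub (hu : Summable fun m : ℤ => (1 + (m:ℝ)^2)^2 * ‖u m‖) (n : ℤ) :
    Dt u n - Dt u (n - 1) = 2 * u n := by
  rw [Dt, Dt, ← Summable.tsum_sub (sSt hu n) (sSt hu (n-1))]
  have h : (fun m : ℤ => SC (n - m) * u m - SC ((n-1) - m) * u m)
      = fun m : ℤ => (if n - m = 0 then (2:ℂ) else 0) * u m := by
    funext m
    have := SC_sub (n - m)
    rw [show (n-1) - m = (n - m) - 1 from by ring]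
    calc SC (n - m) * u m - SC (n - m - 1) * u m
        = (SC (n - m) - SC (n - m - 1)) * u m := by ring
      _ = (if n - m = 0 then (2:ℂ) else 0) * u m := by rw [this]
  rw [h]
  rw [tsum_eq_single n ?_]
  · rw [if_pos (by ring)]
  · intro b hb
    rw [if_neg (by omega), zero_mul]
-- ℓ¹ instances
lemma Ft_l1 (hu : Summable fun m : ℤ => (1 + (m:ℝ)^2)^2 * ‖u m‖)
    (h0 : (∑' m : ℤ, u m) = 0) (h1 : (∑' m : ℤ, (m:ℂ) * u m) = 0) :
    Summable fun n : ℤ => ‖Ft u n‖ := by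
  apply l1_of_moments hu (B := AC)
    (P := fun n m => (n:ℂ) - (m:ℂ)) (Q := fun n m => (m:ℂ) - (n:ℂ))
  · exact AC_bound
  · intro n m; rw [norm_castZ]; exact abs_le_one_add_sq _
  · intro n m
    rw [show (m:ℂ) - (n:ℂ) = -((n:ℂ) - m) from by ring, norm_neg, norm_castZ]
    exact abs_le_one_add_sq _
  · intro n m hn hm
    rw [AC_of_nonneg (by omega)]; push_cast; ring
  · intro n m hn hm
    rw [AC_of_nonpos (by omega)]; push_cast; ring
  · intro n
    have h : (fun m : ℤ => ((n:ℂ) - m) * u m)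
        = fun m : ℤ => (n:ℂ) * u m - (m:ℂ) * u m := by funext m; ring
    rw [h, Summable.tsum_sub ((s_mom0 hu).mul_left _) (s_mom1 hu), tsum_mul_left, h0, h1]
    ring
  · intro n
    have h : (fun m : ℤ => ((m:ℂ) - n) * u m)
        = fun m : ℤ => (m:ℂ) * u m - (n:ℂ) * u m := by funext m; ring
    rw [h, Summable.tsum_sub (s_mom1 hu) ((s_mom0 hu).mul_left _), tsum_mul_left, h0, h1]
    ring

lemma Et_l1 (hu : Summable fun m : ℤ => (1 + (m:ℝ)^2)^2 * ‖u m‖)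
    (h0 : (∑' m : ℤ, u m) = 0) (h1 : (∑' m : ℤ, (m:ℂ) * u m) = 0)
    (h2 : (∑' m : ℤ, (m:ℂ)^2 * u m) = 0) :
    Summable fun n : ℤ => ‖Et u n‖ := by
  apply l1_of_moments hu (B := BC)
    (P := fun n m => -(((n:ℂ) - m)^2 + ((n:ℂ) - m)) / 4)
    (Q := fun n m => (((n:ℂ) - m)^2 + ((n:ℂ) - m)) / 4)
  · exact BC_bound
  · intro n m
    have hb : ‖-(((n:ℂ) - m)^2 + ((n:ℂ) - m)) / 4‖ ≤ (|(n:ℝ) - m|^2 + |(n:ℝ) - m|) / 4 := by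
      rw [neg_div, norm_neg, norm_div]
      have h4 : ‖(4:ℂ)‖ = 4 := by norm_num
      rw [h4]
      gcongr
      refine (norm_add_le _ _).trans ?_
      rw [norm_pow, norm_castZ]
    refine hb.trans ?_
    have := abs_le_one_add_sq ((n:ℝ) - m)
    nlinarith [sq_abs ((n:ℝ) - m), abs_nonneg ((n:ℝ) - m)]
  · intro n m
    have hb : ‖(((n:ℂ) - m)^2 + ((n:ℂ) - m)) / 4‖ ≤ (|(n:ℝ) - m|^2 + |(n:ℝ) - m|) / 4 := by
      rw [norm_div]
      have h4 : ‖(4:ℂ)‖ = 4 := by norm_num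
      rw [h4]
      gcongr
      refine (norm_add_le _ _).trans ?_
      rw [norm_pow, norm_castZ]
    refine hb.trans ?_
    have := abs_le_one_add_sq ((n:ℝ) - m)
    nlinarith [sq_abs ((n:ℝ) - m), abs_nonneg ((n:ℝ) - m)]
  · intro n m hn hm
    rw [BC_of_nonneg (by omega)]; push_cast; ring
  · intro n m hn hm
    rw [BC_of_neg (by omega)]; push_cast; ring
  · intro n
    have h : (fun m : ℤ => (-(((n:ℂ) - m)^2 + ((n:ℂ) - m)) / 4) * u m)
        = fun m : ℤ => (-((n:ℂ)^2 + n) / 4) * u m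
            + ((2 * (n:ℂ) + 1) / 4) * ((m:ℂ) * u m)
            + (-(1:ℂ)/4) * ((m:ℂ)^2 * u m) := by
      funext m; ring
    rw [h, Summable.tsum_add (((s_mom0 hu).mul_left _).add ((s_mom1 hu).mul_left _))
        ((s_mom2 hu).mul_left _),
      Summable.tsum_add ((s_mom0 hu).mul_left _) ((s_mom1 hu).mul_left _),
      tsum_mul_left, tsum_mul_left, tsum_mul_left, h0, h1, h2]
    ring
  · intro n
    have h : (fun m : ℤ => ((((n:ℂ) - m)^2 + ((n:ℂ) - m)) / 4) * u m)
        = fun m : ℤ => (((n:ℂ)^2 + n) / 4) * u m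
            + ((-2 * (n:ℂ) - 1) / 4) * ((m:ℂ) * u m)
            + ((1:ℂ)/4) * ((m:ℂ)^2 * u m) := by
      funext m; ring
    rw [h, Summable.tsum_add (((s_mom0 hu).mul_left _).add ((s_mom1 hu).mul_left _))
        ((s_mom2 hu).mul_left _),
      Summable.tsum_add ((s_mom0 hu).mul_left _) ((s_mom1 hu).mul_left _),
      tsum_mul_left, tsum_mul_left, tsum_mul_left, h0, h1, h2]
    ring

lemma Dt_l1 (hu : Summable fun m : ℤ => (1 + (m:ℝ)^2)^2 * ‖u m‖)
    (h0 : (∑' m : ℤ, u m) = 0) :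
    Summable fun n : ℤ => ‖Dt u n‖ := by
  apply l1_of_moments hu (B := SC)
    (P := fun _ _ => (1:ℂ)) (Q := fun _ _ => (-1:ℂ))
  · intro k
    refine (SC_bound k).trans ?_
    nlinarith [sq_nonneg (k:ℝ)]
  · intro n m
    rw [norm_one]
    nlinarith [sq_nonneg ((n:ℝ) - m)]
  · intro n m
    rw [norm_neg, norm_one]
    nlinarith [sq_nonneg ((n:ℝ) - m)]
  · intro n m hn hm
    exact SC_of_nonneg (by omega)
  · intro n m hn hm
    exact SC_of_neg (by omega)
  · intro n
    simpa using h0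
  · intro n
    have h : (fun m : ℤ => (-1:ℂ) * u m) = fun m : ℤ => -(u m) := by funext m; ring
    rw [h, tsum_neg, h0, neg_zero]

-- boundedness instances
lemma Gt_bdd (hu : Summable fun m : ℤ => (1 + (m:ℝ)^2)^2 * ‖u m‖)
    (h0 : (∑' m : ℤ, u m) = 0) (h1 : (∑' m : ℤ, (m:ℂ) * u m) = 0)
    (h2 : (∑' m : ℤ, (m:ℂ)^2 * u m) = 0) :
    ∃ C : ℝ, ∀ n : ℤ, ‖Gt u n‖ ≤ C := by
  set r : ℂ := (1/12 : ℂ) * ∑' m : ℤ, (m:ℂ)^3 * u m with hr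
  refine ⟨2 * (∑' m : ℤ, (1 + (m:ℝ)^2)^2 * ‖u m‖) + ‖r‖ + ‖-r‖, ?_⟩
  apply bounded_of_moments hu (B := KC)
    (P := fun n m => -(1/12 : ℂ) * ((n:ℂ) - m)^3 + (1/12 : ℂ) * ((n:ℂ) - m))
    (Q := fun n m => (1/12 : ℂ) * ((n:ℂ) - m)^3 - (1/12 : ℂ) * ((n:ℂ) - m))
    (rP := r) (rQ := -r)
  · exact KC_bound
  · intro n m
    have hb : ‖-(1/12 : ℂ) * ((n:ℂ) - m)^3 + (1/12 : ℂ) * ((n:ℂ) - m)‖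
        ≤ (1/12) * |(n:ℝ) - m|^3 + (1/12) * |(n:ℝ) - m| := by
      refine (norm_add_le _ _).trans ?_
      rw [norm_mul, norm_mul, norm_neg, norm_pow, norm_castZ]
      have h12 : ‖(1/12:ℂ)‖ = 1/12 := by norm_num
      rw [h12]
    refine hb.trans ?_
    have hx := abs_le_one_add_sq ((n:ℝ) - m)
    nlinarith [abs_nonneg ((n:ℝ) - m), sq_abs ((n:ℝ) - m),
      sq_nonneg (((n:ℝ) - m)^2 - |(n:ℝ) - m|)]
  · intro n m
    have hb : ‖(1/12 : ℂ) * ((n:ℂ) - m)^3 - (1/12 : ℂ) * ((n:ℂ) - m)‖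
        ≤ (1/12) * |(n:ℝ) - m|^3 + (1/12) * |(n:ℝ) - m| := by
      refine (norm_sub_le _ _).trans ?_
      rw [norm_mul, norm_mul, norm_pow, norm_castZ]
      have h12 : ‖(1/12:ℂ)‖ = 1/12 := by norm_num
      rw [h12]
    refine hb.trans ?_
    have hx := abs_le_one_add_sq ((n:ℝ) - m)
    nlinarith [abs_nonneg ((n:ℝ) - m), sq_abs ((n:ℝ) - m),
      sq_nonneg (((n:ℝ) - m)^2 - |(n:ℝ) - m|)]
  · intro n m hn hm
    rw [KC_of_nonneg (by omega)]; push_cast; ring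
  · intro n m hn hm
    rw [KC_of_nonpos (by omega)]; push_cast; ring
  · intro n
    have h : (fun m : ℤ => (-(1/12 : ℂ) * ((n:ℂ) - m)^3 + (1/12 : ℂ) * ((n:ℂ) - m)) * u m)
        = fun m : ℤ => ((-(n:ℂ)^3 + n) / 12) * u m
            + (((3:ℂ) * n^2 - 1) / 12) * ((m:ℂ) * u m)
            + ((-(3:ℂ) * n) / 12) * ((m:ℂ)^2 * u m)
            + ((1:ℂ)/12) * ((m:ℂ)^3 * u m) := by
      funext m; ring
    rw [h, Summable.tsum_add ((((s_mom0 hu).mul_left _).add ((s_mom1 hu).mul_left _)).add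
          ((s_mom2 hu).mul_left _)) ((s_mom3 hu).mul_left _),
      Summable.tsum_add (((s_mom0 hu).mul_left _).add ((s_mom1 hu).mul_left _))
        ((s_mom2 hu).mul_left _),
      Summable.tsum_add ((s_mom0 hu).mul_left _) ((s_mom1 hu).mul_left _),
      tsum_mul_left, tsum_mul_left, tsum_mul_left, tsum_mul_left, h0, h1, h2, hr]
    ring
  · intro n
    have h : (fun m : ℤ => ((1/12 : ℂ) * ((n:ℂ) - m)^3 - (1/12 : ℂ) * ((n:ℂ) - m)) * u m)
        = fun m : ℤ => (((n:ℂ)^3 - n) / 12) * u m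
            + ((-(3:ℂ) * n^2 + 1) / 12) * ((m:ℂ) * u m)
            + (((3:ℂ) * n) / 12) * ((m:ℂ)^2 * u m)
            + (-(1:ℂ)/12) * ((m:ℂ)^3 * u m) := by
      funext m; ring
    rw [h, Summable.tsum_add ((((s_mom0 hu).mul_left _).add ((s_mom1 hu).mul_left _)).add
          ((s_mom2 hu).mul_left _)) ((s_mom3 hu).mul_left _),
      Summable.tsum_add (((s_mom0 hu).mul_left _).add ((s_mom1 hu).mul_left _))
        ((s_mom2 hu).mul_left _),
      Summable.tsum_add ((s_mom0 hu).mul_left _) ((s_mom1 hu).mul_left _),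
      tsum_mul_left, tsum_mul_left, tsum_mul_left, tsum_mul_left, h0, h1, h2, hr]
    ring

lemma Ft_bdd (hu : Summable fun m : ℤ => (1 + (m:ℝ)^2)^2 * ‖u m‖)
    (h0 : (∑' m : ℤ, u m) = 0) :
    ∃ C : ℝ, ∀ n : ℤ, ‖Ft u n‖ ≤ C := by
  set r : ℂ := ∑' m : ℤ, (m:ℂ) * u m with hr
  refine ⟨2 * (∑' m : ℤ, (1 + (m:ℝ)^2)^2 * ‖u m‖) + ‖-r‖ + ‖r‖, ?_⟩
  apply bounded_of_moments hu (B := AC)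
    (P := fun n m => (n:ℂ) - (m:ℂ)) (Q := fun n m => (m:ℂ) - (n:ℂ))
    (rP := -r) (rQ := r)
  · exact AC_bound2
  · intro n m
    rw [norm_castZ]
    have := abs_le_one_add_sq ((n:ℝ) - m)
    nlinarith [sq_nonneg ((n:ℝ) - m), sq_nonneg (1 + ((n:ℝ)-m)^2), abs_nonneg ((n:ℝ) - m)]
  · intro n m
    rw [show (m:ℂ) - (n:ℂ) = -((n:ℂ) - m) from by ring, norm_neg, norm_castZ]
    have := abs_le_one_add_sq ((n:ℝ) - m)
    nlinarith [sq_nonneg ((n:ℝ) - m), sq_nonneg (1 + ((n:ℝ)-m)^2), abs_nonneg ((n:ℝ) - m)]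
  · intro n m hn hm
    rw [AC_of_nonneg (by omega)]; push_cast; ring
  · intro n m hn hm
    rw [AC_of_nonpos (by omega)]; push_cast; ring
  · intro n
    have h : (fun m : ℤ => ((n:ℂ) - m) * u m)
        = fun m : ℤ => (n:ℂ) * u m - (m:ℂ) * u m := by funext m; ring
    rw [h, Summable.tsum_sub ((s_mom0 hu).mul_left _) (s_mom1 hu), tsum_mul_left, h0, hr]
    ring
  · intro n
    have h : (fun m : ℤ => ((m:ℂ) - n) * u m)
        = fun m : ℤ => (m:ℂ) * u m - (n:ℂ) * u m := by funext m; ring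
    rw [h, Summable.tsum_sub (s_mom1 hu) ((s_mom0 hu).mul_left _), tsum_mul_left, h0, hr]
    ring

lemma Dt_bdd (hu : Summable fun m : ℤ => (1 + (m:ℝ)^2)^2 * ‖u m‖) (n : ℤ) :
    ‖Dt u n‖ ≤ ∑' m : ℤ, ‖u m‖ := by
  apply tsum_of_norm_bounded (s_norm hu).hasSum
  intro m
  rw [norm_mul]
  calc ‖SC (n - m)‖ * ‖u m‖ ≤ 1 * ‖u m‖ :=
        mul_le_mul_of_nonneg_right (SC_bound _) (norm_nonneg _)
    _ = ‖u m‖ := one_mul _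
end PairAux

open PairAux

/-- With the moment conditions `∑ u₁ = ∑ m u₁ = ∑ m² u₁ = ∑ u₂ = 0` and decay of order
`(1+m²)²`, the kernels `G₀⁰[n,m] = -|n-m|/2` and `G₂⁰[n,m] = -|n-m|³/12 + |n-m|/12`
on `ℤ` satisfy `⟨u₂, G₂⁰ u₁⟩ = -⟨G₀⁰ u₂, G₀⁰ u₁⟩`. -/
theorem G2_G0_pairing_on_Z (u₁ u₂ : ℤ → ℂ)
    (h₁ : Summable fun m : ℤ => (1 + (m : ℝ) ^ 2) ^ 2 * ‖u₁ m‖)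
    (h₂ : Summable fun m : ℤ => (1 + (m : ℝ) ^ 2) ^ 2 * ‖u₂ m‖)
    (hm0 : (∑' m : ℤ, u₁ m) = 0)
    (hm1 : (∑' m : ℤ, (m : ℂ) * u₁ m) = 0)
    (hm2 : (∑' m : ℤ, (m : ℂ) ^ 2 * u₁ m) = 0)
    (hn0 : (∑' m : ℤ, u₂ m) = 0) :
    (∑' n : ℤ, (starRingEnd ℂ) (u₂ n) *
        ∑' m : ℤ, (-(1 / 12 : ℂ) * ((|n - m| : ℤ) : ℂ) ^ 3
          + (1 / 12 : ℂ) * ((|n - m| : ℤ) : ℂ)) * u₁ m) =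
      -∑' n : ℤ,
        (starRingEnd ℂ) (-(1 / 2 : ℂ) * ∑' m : ℤ, ((|n - m| : ℤ) : ℂ) * u₂ m) *
          (-(1 / 2 : ℂ) * ∑' m : ℤ, ((|n - m| : ℤ) : ℂ) * u₁ m) := by
  show (∑' n : ℤ, (starRingEnd ℂ) (u₂ n) * Gt u₁ n)
      = -∑' n : ℤ, (starRingEnd ℂ) (-(1/2 : ℂ) * Ft u₂ n) * (-(1/2 : ℂ) * Ft u₁ n)
  -- boundedness and ℓ¹ facts
  obtain ⟨CG, hCG⟩ := Gt_bdd h₁ hm0 hm1 hm2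
  obtain ⟨CH, hCH⟩ := Ft_bdd h₂ hn0
  have hCG0 : (0:ℝ) ≤ CG := le_trans (norm_nonneg _) (hCG 0)
  have hCH0 : (0:ℝ) ≤ CH := le_trans (norm_nonneg _) (hCH 0)
  have lF : Summable fun n : ℤ => ‖Ft u₁ n‖ := Ft_l1 h₁ hm0 hm1
  have lE : Summable fun n : ℤ => ‖Et u₁ n‖ := Et_l1 h₁ hm0 hm1 hm2
  have lD : Summable fun n : ℤ => ‖Dt u₂ n‖ := Dt_l1 h₂ hn0
  set CD : ℝ := ∑' m : ℤ, ‖u₂ m‖ with hCD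
  have hCD0 : (0:ℝ) ≤ CD := tsum_nonneg fun m => norm_nonneg _
  -- summabilities of the various series
  have SA : Summable fun n : ℤ => (starRingEnd ℂ) (u₂ n) * Gt u₁ n := by
    apply Summable.of_norm
    apply Summable.of_nonneg_of_le (fun n => norm_nonneg _) (fun n => ?_)
      ((s_norm h₂).mul_right CG)
    rw [norm_mul, RCLike.norm_conj]
    exact mul_le_mul_of_nonneg_left (hCG n) (norm_nonneg _)
  have Sf : Summable fun n : ℤ => (starRingEnd ℂ) (Dt u₂ n) * Et u₁ n := by
    apply Summable.of_norm
    apply Summable.of_nonneg_of_le (fun n => norm_nonneg _) (fun n => ?_) (lE.mul_left CD)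
    rw [norm_mul, RCLike.norm_conj]
    exact mul_le_mul_of_nonneg_right (Dt_bdd h₂ n) (norm_nonneg _)
  have SA2 : Summable fun n : ℤ =>
      (starRingEnd ℂ) (-(1/2 : ℂ) * Ft u₂ n) * (-(1/2 : ℂ) * Ft u₁ n) := by
    apply Summable.of_norm
    apply Summable.of_nonneg_of_le (fun n => norm_nonneg _) (fun n => ?_)
      (lF.mul_left ((1/2) * CH * (1/2)))
    rw [norm_mul, RCLike.norm_conj, norm_mul, norm_mul, norm_neg]
    have hhalf : ‖(1/2 : ℂ)‖ = 1/2 := by norm_num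
    rw [hhalf]
    nlinarith [hCH n, norm_nonneg (Ft u₂ n), norm_nonneg (Ft u₁ n)]
  -- limits
  have tD : Filter.Tendsto (Dt u₂) Filter.cofinite (nhds 0) :=
    (lD.of_norm).tendsto_cofinite_zero
  have tE : Filter.Tendsto (Et u₁) Filter.cofinite (nhds 0) :=
    (lE.of_norm).tendsto_cofinite_zero
  have tDn : Filter.Tendsto (fun n : ℤ => ‖Dt u₂ n‖) Filter.cofinite (nhds 0) :=
    tendsto_zero_iff_norm_tendsto_zero.mp tD
  have tEn : Filter.Tendsto (fun n : ℤ => ‖Et u₁ n‖) Filter.cofinite (nhds 0) :=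
    tendsto_zero_iff_norm_tendsto_zero.mp tE
  have tc1 : Filter.Tendsto
      (fun n : ℤ => (1/2 : ℂ) * ((starRingEnd ℂ) (Dt u₂ n) * Gt u₁ (n+1)))
      Filter.cofinite (nhds 0) := by
    apply squeeze_zero_norm (a := fun n : ℤ => 1/2 * CG * ‖Dt u₂ n‖)
    · intro n
      rw [norm_mul, norm_mul, RCLike.norm_conj]
      have hhalf : ‖(1/2 : ℂ)‖ = 1/2 := by norm_num
      rw [hhalf]
      nlinarith [hCG (n+1), norm_nonneg (Dt u₂ n), norm_nonneg (Gt u₁ (n+1))]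
    · have := tDn.const_mul (1/2 * CG)
      simpa using this
  have tc2 : Filter.Tendsto
      (fun n : ℤ => -((1/2 : ℂ) * ((starRingEnd ℂ) (Ft u₂ (n+1)) * Et u₁ n)))
      Filter.cofinite (nhds 0) := by
    apply squeeze_zero_norm (a := fun n : ℤ => 1/2 * CH * ‖Et u₁ n‖)
    · intro n
      rw [norm_neg, norm_mul, norm_mul, RCLike.norm_conj]
      have hhalf : ‖(1/2 : ℂ)‖ = 1/2 := by norm_num
      rw [hhalf]
      nlinarith [hCH (n+1), norm_nonneg (Et u₁ n), norm_nonneg (Ft u₂ (n+1))]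
    · have := tEn.const_mul (1/2 * CH)
      simpa using this
  -- Abel summation, step 1
  have Abel1 : (∑' n : ℤ, (starRingEnd ℂ) (u₂ n) * Gt u₁ n)
      = ∑' n : ℤ, -(1/2 : ℂ) * ((starRingEnd ℂ) (Dt u₂ n) * Et u₁ n) := by
    apply tsum_eq_of_sub_telescope SA (Sf.mul_left _)
      (c := fun n : ℤ => (1/2 : ℂ) * ((starRingEnd ℂ) (Dt u₂ n) * Gt u₁ (n+1)))
      (hc := tc1)
    intro n
    have e1 : (2:ℂ) * u₂ n = Dt u₂ n - Dt u₂ (n-1) := by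
      linear_combination - Dt_sub h₂ n
    have e1c : (2:ℂ) * (starRingEnd ℂ) (u₂ n)
        = (starRingEnd ℂ) (Dt u₂ n) - (starRingEnd ℂ) (Dt u₂ (n-1)) := by
      have := congrArg (starRingEnd ℂ) e1
      simpa [map_mul, map_sub, map_ofNat] using this
    have e2 : Et u₁ n = Gt u₁ (n+1) - Gt u₁ n := Et_eq h₁ n
    rw [show n - 1 + 1 = n from by ring, e2]
    linear_combination (Gt u₁ n / 2) * e1c
  -- Abel summation, step 2
  have Abel2 : (∑' n : ℤ, (starRingEnd ℂ) (-(1/2 : ℂ) * Ft u₂ n) * (-(1/2 : ℂ) * Ft u₁ n))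
      = ∑' n : ℤ, (1/2 : ℂ) * ((starRingEnd ℂ) (Dt u₂ n) * Et u₁ n) := by
    apply tsum_eq_of_sub_telescope SA2 (Sf.mul_left _)
      (c := fun n : ℤ => -((1/2 : ℂ) * ((starRingEnd ℂ) (Ft u₂ (n+1)) * Et u₁ n)))
      (hc := tc2)
    intro n
    have e4 : Ft u₁ n = -2 * (Et u₁ n - Et u₁ (n-1)) := by
      linear_combination (2 : ℂ) * Et_sub h₁ n
    have e5c : (starRingEnd ℂ) (Dt u₂ n)
        = (starRingEnd ℂ) (Ft u₂ (n+1)) - (starRingEnd ℂ) (Ft u₂ n) := by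
      have := congrArg (starRingEnd ℂ) (Dt_eq h₂ n)
      simpa [map_sub] using this
    have hcst : (starRingEnd ℂ) (-(1/2 : ℂ)) = -(1/2 : ℂ) := by
      simp [Complex.conj_ofNat]
    rw [show n - 1 + 1 = n from by ring, e4, map_mul, hcst]
    linear_combination (-(1/2 : ℂ) * Et u₁ n) * e5c
  -- conclusion
  rw [Abel1]
  have hneg : (fun n : ℤ => -(1/2 : ℂ) * ((starRingEnd ℂ) (Dt u₂ n) * Et u₁ n))
      = fun n : ℤ => -((1/2 : ℂ) * ((starRingEnd ℂ) (Dt u₂ n) * Et u₁ n)) := by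
    funext n; ring
  rw [hneg, tsum_neg, ← Abel2]
end PairAuxSec
end
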